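/- arXiv:1303.6721 — 5 statements merged into one kernel-verified Lean document; each statement's English description precedes it below -/
import Mathlib

section
/- For every nonnegative integer k there exists a constant c_k > 0 such that |d^k/dξ^k m(ξ)| ≤ c_k (1+|ξ|)^{-1/2-k} for all ξ ∈ ℝ, i.e., the Whitham symbol m(ξ) = sqrt(tanh(ξ)/ξ) belongs to the symbol class S^{-1/2}(ℝ). -/
noncomputable def whithamSymbol (ξ : ℝ) : ℝ :=
  if ξ = 0 then 1 else Real.sqrt (Real.tanh ξ / ξ)

/-!
Writing `tanh ξ / ξ` as the difference quotient `dslope tanh 0 ξ` of an analytic function shows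
that `m = √(dslope tanh 0)` is smooth, the radicand being positive. It is even, so it suffices
to bound its derivatives on `[-1, 1]`, by compactness, and on `[1, ∞)`. There
`m(ξ) = ξ ^ (-1/2) * ψ (exp (-2 ξ))` with `ψ u = √((1 - u) / (1 + u))` smooth on `(-1, 1)`.
The power is a symbol of order `-1/2`, `exp (-2 ξ)` is a symbol of order `0` (it decays faster
than any power), a function smooth near its values stays one by Faà di Bruno, and orders add
under products by Leibniz' rule.
-/

open Real Set Topology
open scoped ContDiff Nat

namespace Real

theorem contDiff_tanh {n : WithTop ℕ∞} : ContDiff ℝ n tanh := by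
  simp only [funext tanh_eq_sinh_div_cosh]
  exact contDiff_sinh.div contDiff_cosh fun x => (cosh_pos x).ne'

theorem hasDerivAt_tanh_zero : HasDerivAt tanh 1 0 := by
  have h : HasDerivAt (fun x => sinh x / cosh x)
      ((cosh 0 * cosh 0 - sinh 0 * sinh 0) / cosh 0 ^ 2) 0 :=
    (hasDerivAt_sinh 0).div (hasDerivAt_cosh 0) (cosh_pos 0).ne'
  rw [funext tanh_eq_sinh_div_cosh]
  convert h using 1
  simp

theorem tanh_pos_iff {x : ℝ} : 0 < tanh x ↔ 0 < x := by
  rw [tanh_eq_sinh_div_cosh, div_pos_iff_of_pos_right (cosh_pos x), sinh_pos_iff]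

theorem tanh_neg_iff {x : ℝ} : tanh x < 0 ↔ x < 0 := by
  simpa [tanh_neg] using tanh_pos_iff (x := -x)

theorem tanh_eq_one_sub_exp_div (x : ℝ) :
    tanh x = (1 - exp (-2 * x)) / (1 + exp (-2 * x)) := by
  rw [tanh_eq, show -2 * x = -x + -x by ring, exp_add, exp_neg]
  field_simp

end Real

theorem Function.Even.abs_iteratedDeriv_neg {f : ℝ → ℝ} (hf : Function.Even f) (n : ℕ)
    (x : ℝ) : |iteratedDeriv n f (-x)| = |iteratedDeriv n f x| := by
  conv_rhs => rw [← funext hf, iteratedDeriv_comp_neg]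
  simp [abs_mul]

theorem norm_iteratedFDerivWithin_eq_abs_iteratedDeriv {s : Set ℝ} (hs : IsOpen s) {x : ℝ}
    (hx : x ∈ s) (n : ℕ) (f : ℝ → ℝ) :
    ‖iteratedFDerivWithin ℝ n f s x‖ = |iteratedDeriv n f x| := by
  rw [norm_iteratedFDerivWithin_eq_norm_iteratedDerivWithin, iteratedDerivWithin_of_isOpen hs hx,
    Real.norm_eq_abs]

theorem rpow_max_one_le_two_rpow_mul {x : ℝ} (hx : 0 ≤ x) (e : ℝ) :
    max 1 x ^ e ≤ 2 ^ |e| * (1 + x) ^ e := by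
  have hmax : 0 < max 1 x := lt_max_of_lt_left one_pos
  rcases le_total 0 e with he | he
  · calc max 1 x ^ e ≤ (1 + x) ^ e :=
          rpow_le_rpow hmax.le (max_le (by linarith) (by linarith)) he
      _ ≤ 2 ^ |e| * (1 + x) ^ e :=
          le_mul_of_one_le_left (by positivity) (one_le_rpow one_le_two (abs_nonneg e))
  · calc max 1 x ^ e = 2 ^ (-e) * (2 ^ e * max 1 x ^ e) := by
          rw [← mul_assoc, ← rpow_add two_pos, neg_add_cancel, rpow_zero, one_mul]
      _ ≤ 2 ^ |e| * (1 + x) ^ e := by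
        rw [abs_of_nonpos he, ← mul_rpow zero_le_two hmax.le]
        refine mul_le_mul_of_nonneg_left (rpow_le_rpow_of_nonpos ?_ ?_ he) (by positivity) <;>
          linarith [le_max_left 1 x, le_max_right 1 x]

/-- `S^m` on the half-line `[1, ∞)`, where the weight `1 + ξ` is comparable to `ξ`. -/
def IsSymbolOnTail (m : ℝ) (f : ℝ → ℝ) : Prop :=
  ContDiffOn ℝ ∞ f (Ioi 0) ∧
    ∀ k : ℕ, ∃ C, ∀ x, 1 ≤ x → |iteratedDeriv k f x| ≤ C * x ^ (m - k)

namespace IsSymbolOnTail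

variable {m a b : ℝ} {f g : ℝ → ℝ}

theorem congr (hf : IsSymbolOnTail m f) (hfg : EqOn f g (Ioi 0)) : IsSymbolOnTail m g := by
  refine ⟨hf.1.congr hfg.symm, fun k => ?_⟩
  obtain ⟨C, hC⟩ := hf.2 k
  refine ⟨C, fun x hx => ?_⟩
  rw [← hfg.iteratedDeriv_of_isOpen isOpen_Ioi k (show (0 : ℝ) < x by linarith)]
  exact hC x hx

theorem rpow (a : ℝ) : IsSymbolOnTail a fun x => x ^ a := by
  refine ⟨fun x hx => (contDiffAt_rpow_const_of_ne (ne_of_gt hx)).contDiffWithinAt,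
    fun k => ⟨|(descPochhammer ℝ k).eval a|, fun x hx => ?_⟩⟩
  rw [iteratedDeriv_eq_iterate, iter_deriv_rpow_const, abs_mul,
    abs_of_nonneg (rpow_nonneg (by linarith) _)]

theorem exp_neg_mul {c : ℝ} (hc : 0 ≤ c) : IsSymbolOnTail 0 fun x => exp (-c * x) := by
  refine ⟨(contDiff_exp.comp (contDiff_const.mul contDiff_id)).contDiffOn,
    fun k => ⟨k !, fun x hx => ?_⟩⟩
  have hx0 : 0 < x := by linarith
  have hpow : (c * x) ^ k ≤ k ! * exp (c * x) := by
    have := pow_div_factorial_le_exp _ (mul_nonneg hc hx0.le) k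
    rwa [div_le_iff₀ (by positivity), mul_comm (exp _)] at this
  rw [iteratedDeriv_exp_const_mul, abs_mul, abs_pow, abs_neg, abs_of_nonneg hc,
    abs_of_pos (exp_pos _), zero_sub, rpow_neg hx0.le, rpow_natCast, neg_mul, exp_neg,
    ← div_eq_mul_inv, ← div_eq_mul_inv, div_le_div_iff₀ (exp_pos _) (by positivity),
    ← mul_pow]
  exact hpow

theorem mul (hf : IsSymbolOnTail a f) (hg : IsSymbolOnTail b g) :
    IsSymbolOnTail (a + b) (f * g) := by
  refine ⟨hf.1.mul hg.1, fun k => ?_⟩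
  choose C hC using hf.2
  choose D hD using hg.2
  refine ⟨∑ i ∈ Finset.range (k + 1), k.choose i * C i * D (k - i), fun x hx => ?_⟩
  have hnhds : Ioi (0 : ℝ) ∈ 𝓝 x := Ioi_mem_nhds (by linarith)
  rw [iteratedDeriv_mul ((hf.1.contDiffAt hnhds).of_le (mod_cast le_top))
    ((hg.1.contDiffAt hnhds).of_le (mod_cast le_top)), Finset.sum_mul]
  refine (Finset.abs_sum_le_sum_abs _ _).trans (Finset.sum_le_sum fun i hi => ?_)
  have hik : i ≤ k := Nat.lt_succ_iff.mp (Finset.mem_range.mp hi)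
  have hweight : x ^ (a - i) * x ^ (b - ↑(k - i)) = x ^ (a + b - k) := by
    rw [← rpow_add (by linarith), Nat.cast_sub hik]
    ring_nf
  calc |k.choose i * iteratedDeriv i f x * iteratedDeriv (k - i) g x|
      = k.choose i * |iteratedDeriv i f x| * |iteratedDeriv (k - i) g x| := by
        simp [abs_mul]
    _ ≤ k.choose i * (C i * x ^ (a - i)) * (D (k - i) * x ^ (b - ↑(k - i))) :=
        mul_le_mul (mul_le_mul_of_nonneg_left (hC i x hx) (by positivity)) (hD _ x hx)
          (abs_nonneg _) (mul_nonneg (by positivity) ((abs_nonneg _).trans (hC i x hx)))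
    _ = k.choose i * C i * D (k - i) * x ^ (a + b - k) := by
        rw [← hweight]
        ring

theorem comp {h : ℝ → ℝ} {t K : Set ℝ} (hf : IsSymbolOnTail 0 f) (ht : IsOpen t)
    (hh : ContDiffOn ℝ ∞ h t) (hft : MapsTo f (Ioi 0) t) (hK : IsCompact K) (hKt : K ⊆ t)
    (hfK : MapsTo f (Ici 1) K) : IsSymbolOnTail 0 (h ∘ f) := by
  refine ⟨hh.comp hf.1 hft, fun n => ?_⟩
  choose B hB using fun i : ℕ => hK.exists_bound_of_continuousOn
    ((hh.continuousOn_iteratedFDerivWithin (m := i) (mod_cast le_top) ht.uniqueDiffOn).mono hKt)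
  choose C hC using hf.2
  set B' := ∑ i ∈ Finset.range (n + 1), |B i|
  set L := 1 + ∑ i ∈ Finset.range (n + 1), |C i|
  have hL : 1 ≤ L := le_add_of_nonneg_right (by positivity)
  refine ⟨n ! * B' * L ^ n, fun x hx => ?_⟩
  have hx0 : x ∈ Ioi 0 := show 0 < x by linarith
  have hweight : ∀ i : ℕ, x ^ ((0 : ℝ) - i) = (x ^ i)⁻¹ := fun i => by
    rw [zero_sub, rpow_neg hx0.out.le, rpow_natCast]
  -- Faà di Bruno with `D = L / x`: the `i`-th derivative of `f` is at most `(L / x) ^ i`.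
  have hfaa := norm_iteratedFDerivWithin_comp_le hh hf.1 (mod_cast le_top) ht.uniqueDiffOn
    isOpen_Ioi.uniqueDiffOn hft hx0 (n := n) (C := B') (D := L / x) (fun i hi => ?_)
    (fun i hi hin => ?_)
  · rw [← norm_iteratedFDerivWithin_eq_abs_iteratedDeriv isOpen_Ioi hx0, hweight]
    refine hfaa.trans_eq ?_
    rw [div_pow]
    ring
  · refine (hB i (f x) (hfK hx)).trans ((le_abs_self _).trans ?_)
    exact Finset.single_le_sum (fun j _ => abs_nonneg (B j))
      (Finset.mem_range.mpr (Nat.lt_succ_of_le hi))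
  · have hCL : C i ≤ L := (le_abs_self _).trans <|
      (Finset.single_le_sum (fun j _ => abs_nonneg (C j))
        (Finset.mem_range.mpr (Nat.lt_succ_of_le hin))).trans (le_add_of_nonneg_left zero_le_one)
    rw [norm_iteratedFDerivWithin_eq_abs_iteratedDeriv isOpen_Ioi hx0, div_pow, div_eq_mul_inv]
    calc |iteratedDeriv i f x| ≤ C i * (x ^ i)⁻¹ := hweight i ▸ hC i x hx
      _ ≤ L ^ i * (x ^ i)⁻¹ := by
        gcongr
        exact hCL.trans (le_self_pow₀ hL (by omega))

theorem exists_bound_of_even (hf : IsSymbolOnTail m f) (heven : Function.Even f) {k : ℕ}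
    (hfk : ContDiff ℝ k f) :
    ∃ c, 0 < c ∧ ∀ ξ, |iteratedDeriv k f ξ| ≤ c * (1 + |ξ|) ^ (m - k) := by
  obtain ⟨C₁, hC₁⟩ :=
    (isCompact_Icc (a := (-1 : ℝ)) (b := 1)).exists_bound_of_continuousOn
    (hfk.continuous_iteratedDeriv' k).continuousOn
  obtain ⟨C₂, hC₂⟩ := hf.2 k
  set C := max 1 (max C₁ C₂)
  have hbound : ∀ ξ, |iteratedDeriv k f ξ| ≤ C * max 1 |ξ| ^ (m - k) := fun ξ => by
    rcases le_total |ξ| 1 with hξ | hξ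
    · rw [max_eq_left hξ, one_rpow, mul_one]
      exact (hC₁ ξ (abs_le.mp hξ)).trans ((le_max_left _ _).trans (le_max_right _ _))
    · have habs : |iteratedDeriv k f ξ| = |iteratedDeriv k f (|ξ|)| := by
        rcases abs_choice ξ with h | h <;> rw [h]
        rw [heven.abs_iteratedDeriv_neg]
      rw [max_eq_right hξ, habs]
      exact (hC₂ |ξ| hξ).trans (mul_le_mul_of_nonneg_right
        ((le_max_right _ _).trans (le_max_right _ _)) (by positivity))
  refine ⟨C * 2 ^ |m - k|, by positivity, fun ξ => (hbound ξ).trans ?_⟩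
  rw [mul_assoc]
  exact mul_le_mul_of_nonneg_left (rpow_max_one_le_two_rpow_mul (abs_nonneg ξ) _) (by positivity)

end IsSymbolOnTail

theorem dslope_tanh_pos (ξ : ℝ) : 0 < dslope tanh 0 ξ := by
  rcases eq_or_ne ξ 0 with rfl | hξ
  · simp [dslope_same, hasDerivAt_tanh_zero.deriv]
  · rw [dslope_of_ne _ hξ, slope_def_field, tanh_zero, sub_zero, sub_zero, div_pos_iff,
      tanh_pos_iff, tanh_neg_iff]
    exact (lt_or_gt_of_ne hξ).symm.imp (fun h => ⟨h, h⟩) fun h => ⟨h, h⟩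

theorem contDiff_dslope_tanh : ContDiff ℝ ω (dslope tanh 0) := by
  refine contDiff_iff_contDiffAt.2 fun ξ => ?_
  rcases eq_or_ne ξ 0 with rfl | hξ
  · obtain ⟨p, hp⟩ := (contDiff_tanh (n := ω)).contDiffAt.analyticAt (x := 0)
    exact hp.has_fpower_series_dslope_fslope.analyticAt.contDiffAt
  · refine ContDiffAt.congr_of_eventuallyEq ?_ (dslope_eventuallyEq_slope_of_ne _ hξ)
    simp only [slope_fun_def_field]
    exact (contDiff_tanh.sub contDiff_const).contDiffAt.div
      (contDiff_id.sub contDiff_const).contDiffAt (by simpa using hξ)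

theorem whithamSymbol_eq_sqrt_dslope : whithamSymbol = fun ξ => √(dslope tanh 0 ξ) := by
  funext ξ
  rcases eq_or_ne ξ 0 with rfl | hξ
  · simp [whithamSymbol, dslope_same, hasDerivAt_tanh_zero.deriv]
  · simp [whithamSymbol, hξ, dslope_of_ne _ hξ, slope_def_field]

theorem contDiff_whithamSymbol {n : WithTop ℕ∞} : ContDiff ℝ n whithamSymbol := by
  refine ContDiff.of_le ?_ (le_top (a := n))
  rw [whithamSymbol_eq_sqrt_dslope, contDiff_iff_contDiffAt]
  exact fun ξ => (contDiffAt_sqrt (dslope_tanh_pos ξ).ne').comp ξ contDiff_dslope_tanh.contDiffAt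

theorem whithamSymbol_even : Function.Even whithamSymbol := fun ξ => by
  by_cases hξ : ξ = 0 <;> simp [whithamSymbol, hξ, tanh_neg, neg_div_neg_eq]

theorem whithamSymbol_eqOn_Ioi :
    EqOn ((fun x => x ^ (-(1 / 2) : ℝ)) *
        ((fun u => √((1 - u) / (1 + u))) ∘ fun x => exp (-2 * x)))
      whithamSymbol (Ioi 0) := fun x (hx : 0 < x) => by
  simp only [Pi.mul_apply, Function.comp_apply, ← tanh_eq_one_sub_exp_div]
  rw [whithamSymbol, if_neg hx.ne', sqrt_div' _ hx.le, rpow_neg hx.le, ← sqrt_eq_rpow,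
    div_eq_inv_mul]

theorem contDiffOn_sqrt_one_sub_div_one_add :
    ContDiffOn ℝ ∞ (fun u => √((1 - u) / (1 + u))) (Ioo (-1) 1) := by
  rintro u ⟨hu₁, hu₂⟩
  have hq : ContDiffAt ℝ ∞ (fun u : ℝ => (1 - u) / (1 + u)) u :=
    (contDiffAt_const.sub contDiffAt_id).div (contDiffAt_const.add contDiffAt_id) (by linarith)
  exact ((contDiffAt_sqrt (div_pos (sub_pos.2 hu₂) (neg_lt_iff_pos_add'.1 hu₁)).ne').comp u
    hq).contDiffWithinAt

theorem isSymbolOnTail_whithamSymbol : IsSymbolOnTail (-(1 / 2)) whithamSymbol := by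
  have hexp : MapsTo (fun x : ℝ => exp (-2 * x)) (Ici 1) (Icc 0 (exp (-2))) :=
    fun x (hx : 1 ≤ x) => ⟨(exp_pos _).le, exp_le_exp.2 (by linarith)⟩
  have hprofile := (IsSymbolOnTail.exp_neg_mul zero_le_two).comp isOpen_Ioo
    contDiffOn_sqrt_one_sub_div_one_add
    (fun x (hx : 0 < x) => ⟨by linarith [exp_pos (-2 * x)], exp_lt_one_iff.2 (by linarith)⟩)
    isCompact_Icc (Icc_subset_Ioo (by norm_num) (exp_lt_one_iff.2 (by norm_num))) hexp
  simpa using ((IsSymbolOnTail.rpow _).mul hprofile).congr whithamSymbol_eqOn_Ioi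

theorem whithamSymbol_symbol_class :
    ∀ k : ℕ, ∃ c : ℝ, 0 < c ∧ ∀ ξ : ℝ,
      |iteratedDeriv k whithamSymbol ξ| ≤ c * (1 + |ξ|) ^ (-(1/2 : ℝ) - k) :=
  fun _ => isSymbolOnTail_whithamSymbol.exists_bound_of_even whithamSymbol_even
    contDiff_whithamSymbol
end

section
/- If f is a 2π-periodic α-Hölder continuous function with α > 1/2, then its Fourier series converges absolutely: the sum over k ∈ ℤ of the absolute values of its Fourier coefficients is finite. -/
/-! Bernstein's argument. Shifting by `h = T / 2 ^ (n + 2)` multiplies the `k`-th Fourier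
coefficient by `e(k h) - 1`, which has modulus at least `1` on the dyadic block
`2 ^ n ≤ |k| < 2 ^ (n + 1)`, while `F (· + h) - F` has sup norm at most `C h ^ α`. Bessel's
inequality bounds the `ℓ²` mass of the block by `(C h ^ α) ^ 2`, and Cauchy–Schwarz over its at
most `2 ^ (n + 2)` indices bounds its `ℓ¹` mass by a multiple of `(2 ^ n) ^ (1 / 2 - α)`, which
is summable in `n` because `α > 1 / 2`. -/

open scoped Real
open MeasureTheory

theorem summable_of_sum_fiber_le {ι β : Type*} {a : ι → ℝ} {b : β → ℝ} (ha : 0 ≤ a)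
    (hb : Summable b) (g : ι → β)
    (h : ∀ n (s : Finset ι), (∀ i ∈ s, g i = n) → ∑ i ∈ s, a i ≤ b n) : Summable a := by
  classical
  have hb0 : 0 ≤ b := fun n => by simpa using h n ∅ (by simp)
  refine summable_of_sum_le (c := ∑' n, b n) ha fun u => ?_
  calc ∑ i ∈ u, a i = ∑ n ∈ u.image g, ∑ i ∈ u with g i = n, a i :=
        (Finset.sum_fiberwise_of_maps_to (fun i hi => Finset.mem_image_of_mem g hi) a).symm
    _ ≤ ∑ n ∈ u.image g, b n :=
        Finset.sum_le_sum fun n _ => h n _ fun i hi => (Finset.mem_filter.mp hi).2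
    _ ≤ ∑' n, b n := hb.sum_le_tsum _ fun n _ => hb0 n

theorem summable_int_of_sum_dyadic_le {a : ℤ → ℝ} {b : ℕ → ℝ} (ha : 0 ≤ a) (hb : Summable b)
    (h : ∀ n (s : Finset ℤ), (∀ k ∈ s, 2 ^ n ≤ k.natAbs ∧ k.natAbs < 2 ^ (n + 1)) →
      ∑ k ∈ s, a k ≤ b n) : Summable a := by
  -- `0` lies in no dyadic block; every other `k` lies in block `Nat.log 2 k.natAbs`.
  rw [← Finset.summable_compl_iff {0}]
  refine summable_of_sum_fiber_le (fun k => ha k) hb (fun k => Nat.log 2 k.1.natAbs)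
    fun n s hs => (Finset.sum_map s (Function.Embedding.subtype _) a).symm.trans_le (h n _ ?_)
  intro k hk
  obtain ⟨⟨k, hk0⟩, hks, rfl⟩ := Finset.mem_map.mp hk
  have hk0 : k.natAbs ≠ 0 := by simpa using hk0
  rw [← hs _ hks]
  exact ⟨Nat.pow_log_le_self 2 hk0, Nat.lt_pow_succ_log_self one_lt_two _⟩

theorem Finset.card_le_two_mul_of_natAbs_lt {s : Finset ℤ} {N : ℕ} (hs : ∀ k ∈ s, k.natAbs < N) :
    s.card ≤ 2 * N := by
  have hsub : s ⊆ Finset.Ioo (-(N : ℤ)) N := fun k hk => by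
    have := hs k hk
    rw [Finset.mem_Ioo]; omega
  calc s.card ≤ (Finset.Ioo (-(N : ℤ)) N).card := Finset.card_le_card hsub
    _ ≤ 2 * N := by rw [Int.card_Ioo]; omega

theorem summable_two_pow_rpow {p : ℝ} (hp : p < 0) : Summable fun n : ℕ => ((2 : ℝ) ^ n) ^ p := by
  simp_rw [← Real.rpow_pow_comm zero_le_two]
  exact summable_geometric_of_lt_one (by positivity)
    (Real.rpow_lt_one_of_one_lt_of_neg one_lt_two hp)

theorem one_le_norm_exp_I_mul_ofReal_sub_one_of_cos_nonpos {θ : ℝ} (h : Real.cos θ ≤ 0) :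
    1 ≤ ‖Complex.exp (Complex.I * θ) - 1‖ := by
  have hcos : Real.cos θ = Real.cos (θ / 2) ^ 2 - Real.sin (θ / 2) ^ 2 := by
    rw [← Real.cos_two_mul', mul_div_cancel₀ _ two_ne_zero]
  rw [Complex.norm_exp_I_mul_ofReal_sub_one, Real.norm_eq_abs, ← one_le_sq_iff_one_le_abs]
  nlinarith [Real.sin_sq_add_cos_sq (θ / 2)]

theorem fourier_apply_add {T : ℝ} (n : ℤ) (x y : AddCircle T) :
    fourier n (x + y) = fourier n x * fourier n y := by
  simp_rw [fourier_apply, smul_add, AddCircle.toCircle_add, Circle.coe_mul]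

theorem Function.Periodic.exists_continuousMap_addCircle {X : Type*} [TopologicalSpace X]
    {T : ℝ} {g : ℝ → X} (hper : Function.Periodic g T) (hg : Continuous g) :
    ∃ G : C(AddCircle T, X), ∀ x : ℝ, G x = g x :=
  ⟨⟨hper.lift, hg.quotient_liftOn' _⟩, hper.lift_coe⟩

section
variable {T : ℝ} [hT : Fact (0 < T)] {E : Type*} [NormedAddCommGroup E] [NormedSpace ℂ E]

theorem fourierCoeff_comp_add_right (F : AddCircle T → E) (x : AddCircle T) (k : ℤ) :
    fourierCoeff (fun t => F (t + x)) k = fourier k x • fourierCoeff F k := by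
  have hshift := integral_add_right_eq_self (μ := AddCircle.haarAddCircle)
    (fun t => fourier (-k) (t - x) • F t) x
  simp only [add_sub_cancel_right] at hshift
  rw [fourierCoeff, hshift, fourierCoeff, ← integral_smul]
  congr 1 with t
  have hx : fourier (-k) (-x) = fourier k x := by rw [fourier_apply, fourier_apply, neg_smul_neg]
  rw [sub_eq_add_neg, fourier_apply_add, hx, smul_smul, mul_comm]

theorem fourierCoeff_comp_add_right_sub {F : AddCircle T → E}
    (hF : Integrable F AddCircle.haarAddCircle) (x : AddCircle T) (k : ℤ) :
    fourierCoeff (fun t => F (t + x) - F t) k = (fourier k x - 1) • fourierCoeff F k := by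
  have hsub := integral_sub ((hF.comp_add_right x).fourier_smul (-k)) (hF.fourier_smul (-k))
  simp only [← smul_sub] at hsub
  rw [fourierCoeff, hsub, ← fourierCoeff, ← fourierCoeff, fourierCoeff_comp_add_right, sub_smul,
    one_smul]

theorem sum_sq_norm_fourierCoeff_le (G : C(AddCircle T, ℂ)) (s : Finset ℤ) :
    ∑ k ∈ s, ‖fourierCoeff G k‖ ^ 2 ≤ ‖G‖ ^ 2 := by
  have hparseval := hasSum_sq_fourierCoeff (ContinuousMap.toLp 2 AddCircle.haarAddCircle ℂ G)
  simp only [fourierCoeff_toLp] at hparseval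
  refine (sum_le_hasSum s (fun _ _ => by positivity) hparseval).trans ?_
  calc ∫ t, ‖ContinuousMap.toLp 2 AddCircle.haarAddCircle ℂ G t‖ ^ 2 ∂AddCircle.haarAddCircle
      = ∫ t, ‖G t‖ ^ 2 ∂AddCircle.haarAddCircle := by
        refine integral_congr_ae ?_
        filter_upwards [ContinuousMap.coeFn_toLp (p := 2) (𝕜 := ℂ) AddCircle.haarAddCircle G]
          with t ht
        rw [ht]
    _ ≤ ∫ _, ‖G‖ ^ 2 ∂AddCircle.haarAddCircle :=
        integral_mono ((G.continuous.norm.pow 2).integrable_of_hasCompactSupport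
          (.of_compactSpace _)) (integrable_const _)
          fun t => pow_le_pow_left₀ (norm_nonneg _) (G.norm_coe_le_norm t) 2
    _ = ‖G‖ ^ 2 := by simp

theorem one_le_norm_fourier_sub_one {n : ℕ} {k : ℤ}
    (hk : 2 ^ n ≤ k.natAbs ∧ k.natAbs < 2 ^ (n + 1)) :
    1 ≤ ‖fourier k ((T / 2 ^ (n + 2) : ℝ) : AddCircle T) - 1‖ := by
  have h2n : (0 : ℝ) < 2 ^ (n + 1) := by positivity
  have hθ : fourier k ((T / 2 ^ (n + 2) : ℝ) : AddCircle T)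
      = Complex.exp (Complex.I * (π * k / 2 ^ (n + 1) : ℝ)) := by
    have hT0 : (T : ℂ) ≠ 0 := by exact_mod_cast hT.out.ne'
    rw [fourier_coe_apply]; congr 1; push_cast; field_simp; ring
  have habs : |π * k / 2 ^ (n + 1)| = π * k.natAbs / 2 ^ (n + 1) := by
    rw [abs_div, abs_mul, abs_of_pos Real.pi_pos, Nat.cast_natAbs, Int.cast_abs, abs_of_pos h2n]
  have hk1 : (2 : ℝ) ^ n ≤ k.natAbs := by exact_mod_cast hk.1
  have hk2 : (k.natAbs : ℝ) ≤ 2 ^ (n + 1) := by exact_mod_cast hk.2.le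
  rw [hθ]
  refine one_le_norm_exp_I_mul_ofReal_sub_one_of_cos_nonpos ?_
  rw [← Real.cos_abs, habs]
  apply Real.cos_nonpos_of_pi_div_two_le_of_le
  · rw [le_div_iff₀ h2n, pow_succ]
    nlinarith [Real.pi_pos]
  · rw [div_le_iff₀ h2n]
    nlinarith [Real.pi_pos]

theorem sum_sq_norm_fourierCoeff_dyadic_le (F : C(AddCircle T, ℂ)) {n : ℕ} {ε : ℝ}
    (hF : ∀ t, ‖F (t + (T / 2 ^ (n + 2) : ℝ)) - F t‖ ≤ ε) {s : Finset ℤ}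
    (hs : ∀ k ∈ s, 2 ^ n ≤ k.natAbs ∧ k.natAbs < 2 ^ (n + 1)) :
    ∑ k ∈ s, ‖fourierCoeff F k‖ ^ 2 ≤ ε ^ 2 := by
  set x : AddCircle T := ((T / 2 ^ (n + 2) : ℝ) : AddCircle T)
  let G : C(AddCircle T, ℂ) := F.comp (ContinuousMap.addRight x) - F
  have hFG : ∀ k ∈ s, ‖fourierCoeff F k‖ ≤ ‖fourierCoeff G k‖ := fun k hk => by
    have hFint := F.continuous.integrable_of_hasCompactSupport (μ := AddCircle.haarAddCircle)
      (.of_compactSpace _)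
    rw [show ⇑G = fun t => F (t + x) - F t from rfl, fourierCoeff_comp_add_right_sub hFint,
      norm_smul]
    exact le_mul_of_one_le_left (norm_nonneg _) (one_le_norm_fourier_sub_one (hs k hk))
  have hG : ‖G‖ ≤ ε := (G.norm_le ((norm_nonneg _).trans (hF 0))).mpr hF
  calc ∑ k ∈ s, ‖fourierCoeff F k‖ ^ 2 ≤ ∑ k ∈ s, ‖fourierCoeff G k‖ ^ 2 :=
        Finset.sum_le_sum fun k hk => pow_le_pow_left₀ (norm_nonneg _) (hFG k hk) 2
    _ ≤ ‖G‖ ^ 2 := sum_sq_norm_fourierCoeff_le G s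
    _ ≤ ε ^ 2 := pow_le_pow_left₀ (norm_nonneg _) hG 2

theorem sum_norm_fourierCoeff_dyadic_le (F : C(AddCircle T, ℂ)) {C α : ℝ}
    (hF : ∀ (t : AddCircle T) (h : ℝ), 0 ≤ h → ‖F (t + h) - F t‖ ≤ C * h ^ α) {n : ℕ}
    {s : Finset ℤ} (hs : ∀ k ∈ s, 2 ^ n ≤ k.natAbs ∧ k.natAbs < 2 ^ (n + 1)) :
    ∑ k ∈ s, ‖fourierCoeff F k‖ ≤ C * T ^ α * ((2 : ℝ) ^ (n + 2)) ^ (1 / 2 - α) := by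
  have hcard : (s.card : ℝ) ≤ 2 ^ (n + 2) := by
    exact_mod_cast (Finset.card_le_two_mul_of_natAbs_lt fun k hk => (hs k hk).2).trans_eq (by ring)
  set N : ℝ := 2 ^ (n + 2)
  have hN : 0 < N := by positivity
  have hstep : ∀ t, ‖F (t + (T / N : ℝ)) - F t‖ ≤ C * (T / N) ^ α :=
    fun t => hF t _ (div_pos hT.out hN).le
  calc ∑ k ∈ s, ‖fourierCoeff F k‖ = ∑ k ∈ s, 1 * ‖fourierCoeff F k‖ := by simp
    _ ≤ √(∑ k ∈ s, 1 ^ 2) * √(∑ k ∈ s, ‖fourierCoeff F k‖ ^ 2) :=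
        Real.sum_mul_le_sqrt_mul_sqrt s _ _
    _ ≤ √N * (C * (T / N) ^ α) := by
        gcongr
        · simpa using hcard
        · refine Real.sqrt_le_iff.mpr ⟨(norm_nonneg _).trans (hstep 0), ?_⟩
          exact sum_sq_norm_fourierCoeff_dyadic_le F hstep hs
    _ = C * T ^ α * N ^ (1 / 2 - α) := by
        rw [Real.sqrt_eq_rpow, Real.div_rpow hT.out.le hN.le, Real.rpow_sub hN]
        field_simp

theorem summable_norm_fourierCoeff_of_holder (F : C(AddCircle T, ℂ)) {C α : ℝ} (hα : 1 / 2 < α)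
    (hF : ∀ (t : AddCircle T) (h : ℝ), 0 ≤ h → ‖F (t + h) - F t‖ ≤ C * h ^ α) :
    Summable fun k => ‖fourierCoeff F k‖ := by
  have hb := ((summable_nat_add_iff 2).mpr (summable_two_pow_rpow (p := 1 / 2 - α)
    (by linarith))).mul_left (C * T ^ α)
  exact summable_int_of_sum_dyadic_le (fun k => norm_nonneg _) hb
    fun n s hs => sum_norm_fourierCoeff_dyadic_le F hF hs

end

theorem fourierCoeff_eq_integral_exp [Fact (0 < 2 * π)] (F : AddCircle (2 * π) → ℂ) (k : ℤ) :
    fourierCoeff F k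
      = (1 / (2 * π : ℂ)) * ∫ x in (0 : ℝ)..(2 * π), Complex.exp (-Complex.I * k * x) * F x := by
  rw [fourierCoeff_eq_intervalIntegral F k 0, zero_add, Complex.real_smul]
  congr 1
  · push_cast; ring
  · refine intervalIntegral.integral_congr fun x _ => ?_
    rw [fourier_coe_apply, smul_eq_mul]
    congr 2
    have hπ : (π : ℂ) ≠ 0 := by exact_mod_cast Real.pi_ne_zero
    push_cast
    field_simp

theorem bernstein_absolute_convergence_general (f : ℝ → ℝ) (C α : NNReal)
    (hper : Function.Periodic f (2 * π)) (hα : (1/2 : ℝ) < α)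
    (hf : HolderWith C α f) :
    Summable fun k : ℤ =>
      ‖(1 / (2 * π : ℂ)) * ∫ x in (0:ℝ)..(2 * π),
        Complex.exp (-Complex.I * k * x) * (f x : ℂ)‖ := by
  have : Fact (0 < 2 * π) := ⟨Real.two_pi_pos⟩
  have hfc : Continuous fun x => (f x : ℂ) :=
    Complex.continuous_ofReal.comp (hf.continuous (by exact_mod_cast (by linarith : (0 : ℝ) < α)))
  have hperC : Function.Periodic (fun x => (f x : ℂ)) (2 * π) := fun x => by simp [hper x]
  obtain ⟨F, hF⟩ := hperC.exists_continuousMap_addCircle hfc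
  have hFholder : ∀ (t : AddCircle (2 * π)) (h : ℝ), 0 ≤ h →
      ‖F (t + h) - F t‖ ≤ C * h ^ (α : ℝ) := by
    intro t h hh
    induction t using QuotientAddGroup.induction_on with
    | H x =>
      rw [← AddCircle.coe_add, hF, hF, ← Complex.ofReal_sub, Complex.norm_real, Real.norm_eq_abs]
      simpa [Real.dist_eq, abs_of_nonneg hh] using hf.dist_le (x + h) x
  refine (summable_norm_fourierCoeff_of_holder F hα hFholder).congr fun k => ?_
  simp only [fourierCoeff_eq_integral_exp, hF]

theorem bernstein_absolute_convergence (f : ℝ → ℝ) (C α : NNReal)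
    (hper : Function.Periodic f (2 * π)) (hα : (1/2 : ℝ) < α) (hα1 : (α : ℝ) ≤ 1)
    (hf : HolderWith C α f) :
    Summable fun k : ℤ =>
      ‖(1 / (2 * π : ℂ)) * ∫ x in (0:ℝ)..(2 * π),
        Complex.exp (-Complex.I * k * x) * (f x : ℂ)‖ :=
  bernstein_absolute_convergence_general f C α hper hα hf
end

section
/- Suppose φ : 𝕊 → ℝ is continuous, μ > 0, sup φ < μ/2, and φ satisfies μφ - φ² = Lφ where Lφ is α-Hölder continuous with 0 < α ≤ 1. Then φ itself is α-Hölder continuous. -/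
/-!
By periodicity and continuity, `φ` attains its supremum `M < μ / 2`. The difference quotient of
`t ↦ μ t - t²` at `a, b` is `μ - (a + b) ≥ μ - 2M > 0`, so this quadratic expands distances on the
range of `φ` by a fixed factor; `φ` is therefore Hölder with the exponent of `g` and constant
`C / (μ - 2M)`.
-/

open scoped Real NNReal

open Function Set

theorem HolderWith.of_mul_dist_le {X Y Z : Type*} [PseudoMetricSpace X] [PseudoMetricSpace Y]
    [PseudoMetricSpace Z] {f : X → Y} {g : X → Z} {C K r : ℝ≥0} (hK : 0 < K)
    (hg : HolderWith C r g) (hfg : ∀ x y, K * dist (f x) (f y) ≤ dist (g x) (g y)) :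
    HolderWith (C / K) r f := by
  intro x y
  rw [edist_nndist, edist_nndist, ← ENNReal.coe_rpow_of_nonneg _ r.coe_nonneg,
    ← ENNReal.coe_mul, ENNReal.coe_le_coe, div_mul_eq_mul_div, le_div_iff₀ hK, mul_comm,
    ← NNReal.coe_le_coe]
  exact (hfg x y).trans (hg.dist_le x y)

theorem Function.Periodic.exists_forall_le_lt_of_forall_lt {α : Type*} [LinearOrder α]
    [TopologicalSpace α] [ClosedIciTopology α] {f : ℝ → α} {T : ℝ} {c : α} (hp : Periodic f T)
    (hT : T ≠ 0) (hf : Continuous f) (hlt : ∀ x, f x < c) : ∃ M < c, ∀ x, f x ≤ M := by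
  obtain ⟨_, ⟨x, rfl⟩, hmax⟩ := (hp.compact_of_continuous hT hf).exists_isGreatest
    (range_nonempty f)
  exact ⟨f x, hlt x, fun y => hmax ⟨y, rfl⟩⟩

theorem mul_dist_le_dist_mul_sub_sq {μ K a b : ℝ} (h : K ≤ μ - (a + b)) :
    K * dist a b ≤ dist (μ * a - a ^ 2) (μ * b - b ^ 2) := by
  have hfactor : μ * a - a ^ 2 - (μ * b - b ^ 2) = (a - b) * (μ - (a + b)) := by ring
  rw [Real.dist_eq, Real.dist_eq, hfactor, abs_mul, mul_comm]
  exact mul_le_mul_of_nonneg_left (h.trans (le_abs_self _)) (abs_nonneg _)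

theorem whitham_holder_regularity_general (μ : ℝ)
    (φ g : ℝ → ℝ) (hcont : Continuous φ)
    (hper : Function.Periodic φ (2 * π))
    (hsub : ∀ x : ℝ, φ x < μ / 2)
    (heq : ∀ x : ℝ, μ * φ x - (φ x) ^ 2 = g x)
    (C α : NNReal)
    (hg : HolderWith C α g) :
    ∃ C' : NNReal, HolderWith C' α φ := by
  obtain ⟨M, hMlt, hM⟩ := hper.exists_forall_le_lt_of_forall_lt Real.two_pi_pos.ne' hcont hsub
  have hgap : 0 < μ - 2 * M := by linarith
  refine ⟨C / ⟨μ - 2 * M, hgap.le⟩, hg.of_mul_dist_le hgap fun x y => ?_⟩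
  rw [← heq, ← heq]
  exact mul_dist_le_dist_mul_sub_sq (K := μ - 2 * M) (by linarith [hM x, hM y])

theorem whitham_holder_regularity (μ : ℝ) (hμ : 0 < μ)
    (φ g : ℝ → ℝ) (hcont : Continuous φ)
    (hper : Function.Periodic φ (2 * π))
    (hsub : ∀ x : ℝ, φ x < μ / 2)
    (heq : ∀ x : ℝ, μ * φ x - (φ x) ^ 2 = g x)
    (C α : NNReal) (hα0 : 0 < (α : ℝ)) (hα1 : (α : ℝ) ≤ 1)
    (hg : HolderWith C α g) :
    ∃ C' : NNReal, HolderWith C' α φ :=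
  whitham_holder_regularity_general μ φ g hcont hper hsub heq C α hg
end

section
/- Suppose φ : 𝕊 → ℝ is continuous, μ > 0, φ ≤ μ/2 everywhere, φ satisfies μφ - φ² = Lφ, and Lφ is (1/2)-Hölder continuous with constant C. If φ(x₀) = μ/2 at some point x₀, then |φ(x₀) - φ(y)| ≤ sqrt(C) |x₀ - y|^{1/4} for all y; in particular φ is (1/4)-Hölder continuous at x₀. -/
/-! Since `μ / 2` is the vertex of `q s = μ s - s²`, one has `q (μ / 2) - q s = (μ / 2 - s)²`.
So at a crest `(φ x₀ - φ y)² = g x₀ - g y ≤ C |x₀ - y| ^ (1/2)`, and since `φ ≤ μ / 2` the gap is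
nonnegative; taking square roots halves the exponent. -/

lemma le_sqrt_mul_rpow_half_of_sq_le {a c t r : ℝ} (ha : 0 ≤ a) (ht : 0 ≤ t)
    (h : a ^ 2 ≤ c * t ^ r) : a ≤ √c * t ^ (r / 2) := by
  calc a = √(a ^ 2) := (Real.sqrt_sq ha).symm
    _ ≤ √(c * t ^ r) := Real.sqrt_le_sqrt h
    _ = √c * t ^ (r / 2) := by
      rw [Real.sqrt_mul' c (Real.rpow_nonneg ht r), Real.sqrt_eq_rpow (t ^ r),
        ← Real.rpow_mul ht, mul_one_div]

lemma HolderWith.sub_le_mul_abs_rpow {C r : NNReal} {g : ℝ → ℝ} (hg : HolderWith C r g)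
    (x y : ℝ) : g x - g y ≤ C * |x - y| ^ (r : ℝ) := by
  simpa only [Real.dist_eq] using (le_abs_self _).trans (hg.dist_le x y)

theorem whitham_quarter_holder_at_crest_general (μ : ℝ)
    (φ g : ℝ → ℝ) (hle : ∀ x : ℝ, φ x ≤ μ / 2)
    (heq : ∀ x : ℝ, μ * φ x - (φ x) ^ 2 = g x)
    (C : NNReal) (hg : HolderWith C (1/2 : NNReal) g)
    (x₀ : ℝ) (hx₀ : φ x₀ = μ / 2) :
    ∀ y : ℝ, |φ x₀ - φ y| ≤ Real.sqrt C * |x₀ - y| ^ (1/4 : ℝ) := by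
  intro y
  have hgap : 0 ≤ φ x₀ - φ y := by linarith [hle y]
  have hsq : (φ x₀ - φ y) ^ 2 = g x₀ - g y := by
    rw [← heq x₀, ← heq y, hx₀]; ring
  have hbound := hg.sub_le_mul_abs_rpow x₀ y
  rw [abs_of_nonneg hgap]
  convert le_sqrt_mul_rpow_half_of_sq_le hgap (abs_nonneg (x₀ - y)) (hsq ▸ hbound) using 3
  norm_num

theorem whitham_quarter_holder_at_crest (μ : ℝ) (hμ : 0 < μ)
    (φ g : ℝ → ℝ) (hle : ∀ x : ℝ, φ x ≤ μ / 2)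
    (heq : ∀ x : ℝ, μ * φ x - (φ x) ^ 2 = g x)
    (C : NNReal) (hg : HolderWith C (1/2 : NNReal) g)
    (x₀ : ℝ) (hx₀ : φ x₀ = μ / 2) :
    ∀ y : ℝ, |φ x₀ - φ y| ≤ Real.sqrt C * |x₀ - y| ^ (1/4 : ℝ) :=
  whitham_quarter_holder_at_crest_general μ φ g hle heq C hg x₀ hx₀
end

section
/- Suppose a family of continuous 2π-periodic functions φ_ε satisfies μφ_ε - φ_ε² = Lφ_ε with sup_x φ_ε(x) ≤ μ/2 - δ for a fixed δ > 0, where L maps bounded sets of C(𝕊) into bounded sets of C^{1/2}(𝕊). If the family is uniformly bounded in C(𝕊), then it is uniformly bounded in C^{1/2}(𝕊), with Hölder constant bounded by (sup_ε ‖Lφ_ε‖_{C^{1/2}})/(2δ). -/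
/-!
Since `g = μ φ - φ²`, we have `g x - g y = (μ - φ x - φ y) (φ x - φ y)`, and the first
factor is at least `2δ` because `φ ≤ μ/2 - δ`. So `a ↦ μ a - a²` is antilipschitz with
constant `(2δ)⁻¹` on `(-∞, μ/2 - δ]`, and `φ` inherits the Hölder bound of `g` divided by `2δ`.
-/

open Set

theorem AntilipschitzWith.holderWith_of_holderWith_comp {X Y Z : Type*} [PseudoEMetricSpace X]
    [PseudoEMetricSpace Y] [PseudoEMetricSpace Z] {K C r : NNReal} {q : Y → Z} {f : X → Y}
    (hq : AntilipschitzWith K q) (hf : HolderWith C r (q ∘ f)) : HolderWith (K * C) r f :=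
  fun x y =>
  calc edist (f x) (f y) ≤ K * edist (q (f x)) (q (f y)) := hq _ _
    _ ≤ K * (C * edist x y ^ (r : ℝ)) := by gcongr; exact hf x y
    _ = ↑(K * C) * edist x y ^ (r : ℝ) := by rw [ENNReal.coe_mul, mul_assoc]

theorem two_mul_mul_abs_sub_le_abs_sub_quadratic {μ δ a b : ℝ} (hδ : 0 ≤ δ)
    (ha : a ≤ μ / 2 - δ) (hb : b ≤ μ / 2 - δ) :
    2 * δ * |a - b| ≤ |(μ * a - a ^ 2) - (μ * b - b ^ 2)| :=
  calc 2 * δ * |a - b| ≤ (μ - a - b) * |a - b| := by gcongr; linarith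
    _ = |(μ - a - b) * (a - b)| := by rw [abs_mul, abs_of_nonneg (a := μ - a - b) (by linarith)]
    _ = |(μ * a - a ^ 2) - (μ * b - b ^ 2)| := by ring_nf

theorem antilipschitzWith_domRestrict_Iic_quadratic {μ δ : ℝ} (hδ : 0 < δ) :
    AntilipschitzWith (2 * δ.toNNReal)⁻¹
      ((Iic (μ / 2 - δ)).domRestrict fun a => μ * a - a ^ 2) := by
  refine AntilipschitzWith.of_le_mul_dist fun a b => ?_
  have h2δ : (0 : ℝ) < 2 * δ := by positivity
  rw [NNReal.coe_inv, NNReal.coe_mul, Real.coe_toNNReal δ hδ.le, NNReal.coe_two,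
    ← div_eq_inv_mul, le_div_iff₀' h2δ, Subtype.dist_eq, Real.dist_eq, Real.dist_eq]
  exact two_mul_mul_abs_sub_le_abs_sub_quadratic hδ.le a.2 b.2

theorem whitham_uniform_holder_bound_general {ι : Type*} (μ δ : ℝ)
    (hδ : 0 < δ) (φ g : ι → ℝ → ℝ)
    (hsub : ∀ i x, φ i x ≤ μ / 2 - δ)
    (heq : ∀ i x, μ * φ i x - (φ i x) ^ 2 = g i x)
    (M : NNReal) (hg : ∀ i, HolderWith M (1/2 : NNReal) (g i)) :
    ∀ i, HolderWith (M / (2 * Real.toNNReal δ)) (1/2 : NNReal) (φ i) := by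
  intro i
  have hφ : HolderWith ((2 * δ.toNNReal)⁻¹ * M) (1/2 : NNReal)
      (codRestrict (φ i) (Iic (μ / 2 - δ)) (hsub i)) :=
    (antilipschitzWith_domRestrict_Iic_quadratic hδ).holderWith_of_holderWith_comp
      (by convert hg i using 1; exact funext (heq i))
  rw [div_eq_inv_mul]
  -- the distance on a subtype is by definition that of the values
  exact fun x y => hφ x y

theorem whitham_uniform_holder_bound {ι : Type*} (μ δ B : ℝ) (hμ : 0 < μ)
    (hδ : 0 < δ) (φ g : ι → ℝ → ℝ)
    (hcont : ∀ i, Continuous (φ i))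
    (hsub : ∀ i x, φ i x ≤ μ / 2 - δ)
    (heq : ∀ i x, μ * φ i x - (φ i x) ^ 2 = g i x)
    (hbd : ∀ i x, |φ i x| ≤ B)
    (M : NNReal) (hg : ∀ i, HolderWith M (1/2 : NNReal) (g i)) :
    ∀ i, HolderWith (M / (2 * Real.toNNReal δ)) (1/2 : NNReal) (φ i) :=
  whitham_uniform_holder_bound_general μ δ hδ φ g hsub heq M hg
end
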